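/- For the lexicographic simulating functions at block length d, the pairs (U_L, V_L) = (f_{L,d}(X^d), g_{L,d}(Y^d)) and (U_{L,d'}, V_{L,d'}) for any d' > d satisfy d_TV(P_{U_L V_L}, P_{U_{L,d'} V_{L,d'}}) ≤ c·2^{−d} for a universal constant c, where d_TV is the sum of absolute differences of probabilities. -/

import Mathlib

/-!
Both distributions can be computed on the same `d'`-bit strings with the same source weights,
since `f_{L,d}` only reads the first `d` bits and the `d'`-bit weights marginalise to the
`d`-bit ones. Read on `d'` bits, `f_{L,d}(x) = 1[⌊x / 2^{d'-d}⌋ < ⌈2^d a⌉]` can disagree with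
`f_{L,d'}` only on strings whose value lies in `[⌈2^{d'} a⌉, 2^{d'-d} ⌈2^d a⌉)`, an interval of
length at most `2^{d'-d}`. Each string has marginal mass `2^{-d'}`, so on each of the four
outcomes the two distributions differ by at most `2 · 2^{-d}`.
-/

/-- Numeric value of a binary string (MSB first), so that lexicographic order on strings
coincides with the order of values. -/
def lexVal (d : ℕ) (x : Fin d → Bool) : ℕ :=
  ∑ i : Fin d, if x i then 2 ^ (d - 1 - i.val) else 0

/-- Joint output distribution of the lexicographic simulating functions
`f_{L,d}(x) = 1[x ⊏ x_c(d,a)]`, `g_{L,d}(y) = 1[y ⊏ y_c(d,b)]` (with `x_c(d,a)` the binary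
representation of `⌈2^d a⌉`), under the doubly-symmetric binary source with correlation `ρ`
and uniform marginals. -/
noncomputable def lexDist (ρ a b : ℝ) (d : ℕ) : Bool × Bool → ℝ :=
  fun uv => ∑ x : Fin d → Bool, ∑ y : Fin d → Bool,
    if (decide (lexVal d x < ⌈(2 : ℝ) ^ d * a⌉₊) = uv.1 ∧
        decide (lexVal d y < ⌈(2 : ℝ) ^ d * b⌉₊) = uv.2)
      then ∏ i, (if x i = y i then (1 + ρ) / 4 else (1 - ρ) / 4) else 0

open Finset

lemma lexVal_add (d n : ℕ) (x : Fin (d + n) → Bool) :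
    lexVal (d + n) x = lexVal d (Fin.take d (Nat.le_add_right d n) x) * 2 ^ n
      + lexVal n (fun i => x (Fin.natAdd d i)) := by
  rw [lexVal, Fin.sum_univ_add, lexVal, sum_mul, lexVal]
  congr 1 <;> refine sum_congr rfl fun i _ => ?_
  · have : d + n - 1 - i.val = (d - 1 - i.val) + n := by omega
    rw [Fin.take_apply, Fin.val_castAdd, this, pow_add, ite_mul, zero_mul]
    rfl
  · have : d + n - 1 - (d + i.val) = n - 1 - i.val := by omega
    rw [Fin.val_natAdd, this]

lemma lexVal_one (z : Fin 1 → Bool) : lexVal 1 z = (z 0).toNat := by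
  rw [lexVal, Fin.sum_univ_one]
  cases z 0 <;> rfl

lemma lexVal_lt (d : ℕ) (x : Fin d → Bool) : lexVal d x < 2 ^ d := by
  induction d with
  | zero => simp [lexVal]
  | succ d ih =>
    have hsplit := lexVal_add d 1 x
    have hlast := Bool.toNat_lt (x (Fin.natAdd d 0))
    have := ih (Fin.take d (Nat.le_add_right d 1) x)
    rw [lexVal_one, pow_one] at hsplit
    rw [pow_succ]
    omega

lemma lexVal_take (d n : ℕ) (x : Fin (d + n) → Bool) :
    lexVal d (Fin.take d (Nat.le_add_right d n) x) = lexVal (d + n) x / 2 ^ n := by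
  rw [lexVal_add, mul_comm, Nat.mul_add_div (by positivity), Nat.div_eq_of_lt (lexVal_lt n _),
    add_zero]

lemma lexVal_injective (d : ℕ) : Function.Injective (lexVal d) := by
  induction d with
  | zero => intro x y _; exact funext fun i => i.elim0
  | succ d ih =>
    intro x y h
    have htake := ih ((lexVal_take d 1 x).trans (h ▸ (lexVal_take d 1 y).symm))
    have hlast : x (Fin.natAdd d 0) = y (Fin.natAdd d 0) := by
      have hx := lexVal_add d 1 x
      rw [h, lexVal_add d 1 y, htake, lexVal_one, lexVal_one] at hx
      have hbit : (x (Fin.natAdd d 0)).toNat = (y (Fin.natAdd d 0)).toNat := by omega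
      revert hbit
      cases x (Fin.natAdd d 0) <;> cases y (Fin.natAdd d 0) <;> simp
    refine (Fin.appendEquiv d 1).symm.injective (Prod.ext htake ?_)
    exact funext fun i => Subsingleton.elim i 0 ▸ hlast

lemma Fintype.sum_fin_append {M α : Type*} [AddCommMonoid M] [Fintype α] (d n : ℕ)
    (f : (Fin (d + n) → α) → M) :
    ∑ x, f x = ∑ x₁ : Fin d → α, ∑ x₂ : Fin n → α, f (Fin.append x₁ x₂) := by
  rw [← (Fin.appendEquiv d n).sum_comp, Fintype.sum_prod_type]
  rfl

noncomputable def dsbsWeight (ρ : ℝ) (d : ℕ) (x y : Fin d → Bool) : ℝ :=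
  ∏ i, if x i = y i then (1 + ρ) / 4 else (1 - ρ) / 4

noncomputable def lexFun (d : ℕ) (a : ℝ) (x : Fin d → Bool) : Bool :=
  decide (lexVal d x < ⌈(2 : ℝ) ^ d * a⌉₊)

lemma lexDist_eq_sum (ρ a b : ℝ) (d : ℕ) (uv : Bool × Bool) :
    lexDist ρ a b d uv = ∑ x, ∑ y,
      if lexFun d a x = uv.1 ∧ lexFun d b y = uv.2 then dsbsWeight ρ d x y else 0 :=
  rfl

section dsbsWeight

variable (ρ : ℝ) {d n : ℕ}

lemma dsbsWeight_nonneg (hρ₁ : -1 ≤ ρ) (hρ₂ : ρ ≤ 1) (x y : Fin d → Bool) :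
    0 ≤ dsbsWeight ρ d x y :=
  prod_nonneg fun _ _ => by split <;> linarith

lemma dsbsWeight_comm (x y : Fin d → Bool) : dsbsWeight ρ d x y = dsbsWeight ρ d y x := by
  simp only [dsbsWeight, eq_comm]

lemma sum_dsbsWeight_right (x : Fin d → Bool) : ∑ y, dsbsWeight ρ d x y = ((2 : ℝ) ^ d)⁻¹ := by
  have hcoord : ∀ i, ∑ b : Bool, (if x i = b then (1 + ρ) / 4 else (1 - ρ) / 4) = 2⁻¹ := by
    intro i
    cases x i <;> simp only [Fintype.sum_bool] <;> norm_num <;> ring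
  unfold dsbsWeight
  rw [← Fintype.prod_sum (fun i b => if x i = b then (1 + ρ) / 4 else (1 - ρ) / 4)]
  simp only [hcoord, prod_const, card_univ, Fintype.card_fin, inv_pow]

lemma sum_dsbsWeight_left (y : Fin d → Bool) : ∑ x, dsbsWeight ρ d x y = ((2 : ℝ) ^ d)⁻¹ := by
  simp only [dsbsWeight_comm ρ _ y, sum_dsbsWeight_right]

lemma sum_sum_dsbsWeight : ∑ x, ∑ y, dsbsWeight ρ d x y = 1 := by
  simp only [sum_dsbsWeight_right, sum_const, card_univ, Fintype.card_fun, Fintype.card_bool,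
    Fintype.card_fin, nsmul_eq_mul]
  push_cast
  exact mul_inv_cancel₀ (by positivity)

lemma dsbsWeight_append (x₁ y₁ : Fin d → Bool) (x₂ y₂ : Fin n → Bool) :
    dsbsWeight ρ (d + n) (Fin.append x₁ x₂) (Fin.append y₁ y₂)
      = dsbsWeight ρ d x₁ y₁ * dsbsWeight ρ n x₂ y₂ := by
  simp only [dsbsWeight, Fin.prod_univ_add, Fin.append_left, Fin.append_right]

lemma sum_sum_take_mul_dsbsWeight (F : (Fin d → Bool) → (Fin d → Bool) → ℝ) :
    ∑ x : Fin (d + n) → Bool, ∑ y : Fin (d + n) → Bool,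
      F (Fin.take d (Nat.le_add_right d n) x) (Fin.take d (Nat.le_add_right d n) y)
        * dsbsWeight ρ (d + n) x y
      = ∑ x, ∑ y, F x y * dsbsWeight ρ d x y := by
  have htake : ∀ (z₁ : Fin d → Bool) (z₂ : Fin n → Bool),
      Fin.take d (Nat.le_add_right d n) (Fin.append z₁ z₂) = z₁ := fun z₁ z₂ =>
    (Fin.take_append_left d le_rfl z₁ z₂).trans (Fin.take_eq_self z₁)
  rw [Fintype.sum_fin_append d n]
  refine sum_congr rfl fun x₁ _ => ?_
  rw [sum_comm, Fintype.sum_fin_append d n]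
  refine sum_congr rfl fun y₁ _ => ?_
  simp only [htake, dsbsWeight_append, ← mul_assoc, ← mul_sum]
  rw [sum_comm, sum_sum_dsbsWeight, mul_one]

end dsbsWeight

lemma abs_sum_ite_sub_sum_ite_le {α β : Type*} [Fintype α] [Fintype β] (w : α → β → ℝ)
    (hw : ∀ x y, 0 ≤ w x y) (f f' : α → Bool) (g g' : β → Bool) (u v : Bool) :
    |∑ x, ∑ y, (if f x = u ∧ g y = v then w x y else 0)
        - ∑ x, ∑ y, (if f' x = u ∧ g' y = v then w x y else 0)|
      ≤ ∑ x with f x ≠ f' x, ∑ y, w x y + ∑ x, ∑ y with g y ≠ g' y, w x y := by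
  have hpt : ∀ x y, |(if f x = u ∧ g y = v then w x y else 0)
      - (if f' x = u ∧ g' y = v then w x y else 0)|
        ≤ (if f x ≠ f' x then w x y else 0) + (if g y ≠ g' y then w x y else 0) := by
    intro x y
    have habs : ∀ p q : Prop, [Decidable p] → [Decidable q] →
        |(if p then w x y else 0) - (if q then w x y else 0)| ≤ w x y := by
      intro p q _ _
      split_ifs <;> simp [abs_of_nonneg (hw x y), hw x y]
    by_cases hf : f x = f' x
    · by_cases hg : g y = g' y
      · simp [hf, hg]
      · exact (habs _ _).trans
          (le_add_of_nonneg_of_le (ite_nonneg (hw x y) le_rfl) (by rw [if_pos hg]))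
    · exact (habs _ _).trans
        (le_add_of_le_of_nonneg (by rw [if_pos hf]) (ite_nonneg (hw x y) le_rfl))
  rw [← sum_sub_distrib]
  calc _ ≤ ∑ x, |∑ y, (if f x = u ∧ g y = v then w x y else 0)
          - ∑ y, (if f' x = u ∧ g' y = v then w x y else 0)| := abs_sum_le_sum_abs _ _
    _ ≤ ∑ x, ∑ y, ((if f x ≠ f' x then w x y else 0) + (if g y ≠ g' y then w x y else 0)) :=
        sum_le_sum fun x _ => by
          rw [← sum_sub_distrib]
          exact (abs_sum_le_sum_abs _ _).trans (sum_le_sum fun y _ => hpt x y)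
    _ = _ := by simp only [sum_add_distrib, sum_filter, ite_sum_zero]

lemma Nat.ceil_mul_le_ceil_mul (c : ℝ) (k : ℕ) : ⌈c * k⌉₊ ≤ ⌈c⌉₊ * k := by
  rw [Nat.ceil_le]
  push_cast
  exact mul_le_mul_of_nonneg_right (Nat.le_ceil c) k.cast_nonneg

lemma Nat.ceil_mul_le_ceil_mul_add (c : ℝ) (k : ℕ) : ⌈c⌉₊ * k ≤ ⌈c * k⌉₊ + k := by
  rcases le_or_gt c 0 with hc | hc
  · simp [Nat.ceil_eq_zero.mpr hc]
  · have hceil := Nat.ceil_lt_add_one hc.le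
    have hk := k.cast_nonneg (α := ℝ)
    have : (⌈c⌉₊ : ℝ) * k ≤ ⌈c * k⌉₊ + k := by
      nlinarith [Nat.le_ceil (c * k)]
    exact_mod_cast this

lemma card_lexFun_take_ne_le (a : ℝ) (d n : ℕ) :
    #{x : Fin (d + n) → Bool |
        lexFun d a (Fin.take d (Nat.le_add_right d n) x) ≠ lexFun (d + n) a x} ≤ 2 ^ n := by
  have hceil : ⌈(2 : ℝ) ^ (d + n) * a⌉₊ = ⌈(2 : ℝ) ^ d * a * ((2 ^ n : ℕ) : ℝ)⌉₊ := by
    push_cast; ring_nf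
  have hupper : ⌈(2 : ℝ) ^ (d + n) * a⌉₊ ≤ ⌈(2 : ℝ) ^ d * a⌉₊ * 2 ^ n :=
    hceil ▸ Nat.ceil_mul_le_ceil_mul _ _
  have hlower : ⌈(2 : ℝ) ^ d * a⌉₊ * 2 ^ n ≤ ⌈(2 : ℝ) ^ (d + n) * a⌉₊ + 2 ^ n :=
    hceil ▸ Nat.ceil_mul_le_ceil_mul_add _ _
  calc _ ≤ #(Ico ⌈(2 : ℝ) ^ (d + n) * a⌉₊ (⌈(2 : ℝ) ^ d * a⌉₊ * 2 ^ n)) :=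
        card_le_card_of_injOn (lexVal (d + n)) ?_ (lexVal_injective _).injOn
    _ ≤ 2 ^ n := by rw [Nat.card_Ico]; omega
  intro x hx
  simp only [coe_filter, mem_univ, true_and, Set.mem_ofPred_eq, lexFun, lexVal_take, ne_eq,
    decide_eq_decide, Nat.div_lt_iff_lt_mul (by positivity : 0 < 2 ^ n)] at hx
  rw [coe_Ico, Set.mem_Ico]
  omega

lemma abs_lexDist_sub_lexDist_add_le (ρ a b : ℝ) (hρ₁ : -1 ≤ ρ) (hρ₂ : ρ ≤ 1) (d n : ℕ)
    (uv : Bool × Bool) :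
    |lexDist ρ a b d uv - lexDist ρ a b (d + n) uv| ≤ 2 * ((2 : ℝ) ^ d)⁻¹ := by
  have hmarg := sum_sum_take_mul_dsbsWeight ρ (n := n)
    fun x y => if lexFun d a x = uv.1 ∧ lexFun d b y = uv.2 then (1 : ℝ) else 0
  simp only [boole_mul] at hmarg
  have hmass : ∀ c : ℝ,
      (#{x : Fin (d + n) → Bool |
        lexFun d c (Fin.take d (Nat.le_add_right d n) x) ≠ lexFun (d + n) c x} : ℝ)
        * ((2 : ℝ) ^ (d + n))⁻¹ ≤ ((2 : ℝ) ^ d)⁻¹ := fun c =>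
    calc _ ≤ (2 : ℝ) ^ n * ((2 : ℝ) ^ (d + n))⁻¹ := by
          gcongr; exact_mod_cast card_lexFun_take_ne_le c d n
      _ = ((2 : ℝ) ^ d)⁻¹ := by rw [pow_add]; field_simp
  rw [lexDist_eq_sum, ← hmarg, lexDist_eq_sum]
  refine (abs_sum_ite_sub_sum_ite_le _ (dsbsWeight_nonneg ρ hρ₁ hρ₂) _ _ _ _ _ _).trans ?_
  rw [sum_comm (t := univ.filter _)]
  simp only [sum_dsbsWeight_right, sum_dsbsWeight_left, sum_const, nsmul_eq_mul]
  linarith [hmass a, hmass b]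

/-- There is a universal constant `c > 0` such that for all target marginals
`a, b ∈ [0,1]`, all correlations `ρ ∈ [-1,1]`, and all block lengths `d < d'`, the output
distributions of the lexicographic simulating functions satisfy
`d_TV(P_{U_L V_L}, P_{U_{L,d'} V_{L,d'}}) ≤ c · 2^{−d}`. -/
theorem stmt_19 :
    ∃ c : ℝ, 0 < c ∧ ∀ (ρ a b : ℝ), -1 ≤ ρ → ρ ≤ 1 →
      0 ≤ a → a ≤ 1 → 0 ≤ b → b ≤ 1 →
      ∀ d d' : ℕ, d < d' →
        ∑ uv : Bool × Bool, |lexDist ρ a b d uv - lexDist ρ a b d' uv|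
          ≤ c * ((2 : ℝ) ^ d)⁻¹ := by
  refine ⟨8, by norm_num, fun ρ a b hρ₁ hρ₂ _ _ _ _ d d' hdd' => ?_⟩
  obtain ⟨n, rfl⟩ := Nat.exists_eq_add_of_le hdd'.le
  calc _ ≤ ∑ _uv : Bool × Bool, 2 * ((2 : ℝ) ^ d)⁻¹ :=
        sum_le_sum fun uv _ => abs_lexDist_sub_lexDist_add_le ρ a b hρ₁ hρ₂ d n uv
    _ = 8 * ((2 : ℝ) ^ d)⁻¹ := by
        rw [sum_const, card_univ, Fintype.card_prod, Fintype.card_bool, nsmul_eq_mul]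
        push_cast
        ring
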